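/- arXiv:1510.05527 — 2 statements merged into one kernel-verified Lean document; each statement's English description precedes it below -/
import Mathlib

section
/- For posets B, C, the application relation ap_s : (B ⋉ C) × B → C defined by ((b,c),b') ap_s c' ⟺ b' ≤ b ∧ c ≤ c' is an ideal relation, and for every ideal relation R : A × B → C one has (cur_x R × ≤_B) ; ap_s = R, where cur_x R relates a to (b,c) iff (a,b) R c. -/
def IsIdeal {A B : Type*} [Preorder A] [Preorder B] (R : A → B → Prop) : Prop :=
  ∀ ⦃a' a b b'⦄, a' ≤ a → R a b → b ≤ b' → R a' b'

def rcomp {A B C : Type*} (Q : A → B → Prop) (R : B → C → Prop) : A → C → Prop :=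
  fun a c => ∃ b, Q a b ∧ R b c

def curx {A B C : Type*} (R : A × B → C → Prop) : A → Bᵒᵈ × C → Prop :=
  fun a p => R (a, OrderDual.ofDual p.1) p.2

def rprod {A B C D : Type*} (R : A → B → Prop) (S : C → D → Prop) :
    A × C → B × D → Prop :=
  fun p q => R p.1 q.1 ∧ S p.2 q.2

def aps {B C : Type*} [Preorder B] [Preorder C] : (Bᵒᵈ × C) × B → C → Prop :=
  fun p c' => p.2 ≤ OrderDual.ofDual p.1.1 ∧ p.1.2 ≤ c'

theorem aps_ideal_and_beta {A B C : Type*} [PartialOrder A] [PartialOrder B] [PartialOrder C] :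
    IsIdeal (aps (B := B) (C := C)) ∧
    (∀ R : A × B → C → Prop, IsIdeal R →
      rcomp (rprod (curx R) (fun b b' : B => b ≤ b')) aps = R) := by
  constructor
  · rintro ⟨⟨b,c⟩,b1⟩ ⟨⟨b2,c2⟩,b3⟩ d d' ⟨⟨hb,hc⟩,hb1⟩ ⟨h1,h2⟩ hd
    exact ⟨le_trans hb1 (le_trans h1 hb), le_trans hc (le_trans h2 hd)⟩
  · intro R hR
    funext p c
    apply propext
    constructor
    · rintro ⟨⟨⟨b,c0⟩,b'⟩, ⟨hcur, hb⟩, h1, h2⟩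
      exact hR (show (p.1,p.2) ≤ (p.1,b) from ⟨le_rfl, le_trans hb h1⟩) hcur h2
    · intro h
      exact ⟨((OrderDual.toDual p.2, c), p.2), ⟨h, le_rfl⟩, le_rfl, le_rfl⟩
end

section
/- For a relation R between posets A and B such that (≤_A) ; R ⊆ R, the inverse-image function on subsets, X ↦ {a | ∀ b, a R b → b ∈ X}, maps upward closed subsets of B to upward closed subsets of A, and is monotone with respect to inclusion of subsets; moreover when R is an ideal this universal image function 𝔸R is refinement injective: for ideals R, S, R ⊇ S if and only if 𝔸R X ⊆ 𝔸S X for all upward closed X. -/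
theorem universal_image_props {A B : Type*} [PartialOrder A] [PartialOrder B] :
    (∀ R : A → B → Prop, (∀ (a' a : A) (b : B), a' ≤ a → R a b → R a' b) →
      (∀ X : Set B, IsUpperSet X → IsUpperSet {a | ∀ b, R a b → b ∈ X}) ∧
      (∀ X Y : Set B, X ⊆ Y → {a | ∀ b, R a b → b ∈ X} ⊆ {a | ∀ b, R a b → b ∈ Y})) ∧
    (∀ R S : A → B → Prop, IsIdeal R → IsIdeal S →
      ((∀ a b, S a b → R a b) ↔
        ∀ X : Set B, IsUpperSet X →
          {a | ∀ b, R a b → b ∈ X} ⊆ {a | ∀ b, S a b → b ∈ X})) := by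
  constructor
  · intro R hR
    constructor
    · intro X _ a a' haa' ha b hb
      exact ha b (hR a a' b haa' hb)
    · intro X Y hXY a ha b hb
      exact hXY (ha b hb)
  · intro R S hR hS
    constructor
    · intro h X _ a ha b hb
      exact ha b (h a b hb)
    · intro h a b hSab
      have hX : IsUpperSet {b' | R a b'} := fun b1 b2 h12 h1 => hR le_rfl h1 h12
      exact h _ hX (fun b' hb' => hb') b hSab
end
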